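/- For any Eulerian digraph D and any k, the number of k-spanning trees of D rooted at r is independent of the choice of the root vertex r. -/

import Mathlib

open Classical

/-- A finite multidigraph: finite vertex and edge types with initial and final
vertex maps. -/
structure Multidigraph where
  V : Type
  E : Type
  [fintV : Fintype V]
  [fintE : Fintype E]
  first : E → V
  last : E → V

attribute [instance] Multidigraph.fintV Multidigraph.fintE

namespace Multidigraph

variable (D : Multidigraph)

/-- The out-degree of a vertex. -/
noncomputable def outdeg (v : D.V) : ℕ := Nat.card {e : D.E // D.first e = v}

/-- The in-degree of a vertex. -/
noncomputable def indeg (v : D.V) : ℕ := Nat.card {e : D.E // D.last e = v}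

/-- Undirected adjacency using only edges in `T`. -/
def Adj (T : Set D.E) (a b : D.V) : Prop :=
  ∃ e ∈ T, (D.first e = a ∧ D.last e = b) ∨ (D.first e = b ∧ D.last e = a)

/-- Undirected reachability using only edges in `T`. -/
def Reach (T : Set D.E) : D.V → D.V → Prop := Relation.ReflTransGen (D.Adj T)

/-- The underlying undirected graph is connected. -/
def Connected : Prop := ∀ a b : D.V, D.Reach Set.univ a b

/-- An Eulerian digraph: connected and with in-degree equal to out-degree at
every vertex. -/
def Eulerian : Prop := D.Connected ∧ ∀ v : D.V, D.indeg v = D.outdeg v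

/-- `T` is a spanning tree of the underlying undirected graph: it connects all
vertices and has `|V| - 1` edges. -/
def IsSpanningTree (T : Set D.E) : Prop :=
  (∀ a b : D.V, D.Reach T a b) ∧ Nat.card T = Nat.card D.V - 1

/-- The out-degree of `v` in the subgraph `T` after reversing the orientations
of the edges in `S`. -/
noncomputable def outdegRev (T S : Set D.E) (v : D.V) : ℕ :=
  Nat.card {e : D.E // (e ∈ T \ S ∧ D.first e = v) ∨ (e ∈ S ∧ D.last e = v)}

/-- `T` becomes an oriented spanning tree rooted at `r` (every vertex has a
unique directed path to `r`, i.e. every non-root vertex has out-degree `1` and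
the root has out-degree `0` in the tree) after reversing exactly the edges of
`S ⊆ T`. -/
def IsOrientedSpanningTreeRev (T S : Set D.E) (r : D.V) : Prop :=
  D.IsSpanningTree T ∧ S ⊆ T ∧ (∀ v : D.V, v ≠ r → D.outdegRev T S v = 1) ∧
    D.outdegRev T S r = 0

/-- `T` is an oriented spanning tree rooted at `r`: every vertex has a unique
directed path to `r`. -/
def IsOrientedSpanningTree (T : Set D.E) (r : D.V) : Prop :=
  D.IsOrientedSpanningTreeRev T ∅ r

/-- `T` is a `k`-spanning tree rooted at `r`: reversing the orientation of
exactly `k` of its edges yields an oriented spanning tree rooted at `r`. -/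
def IsKSpanningTree (T : Set D.E) (r : D.V) (k : ℕ) : Prop :=
  ∃ S : Set D.E, Nat.card S = k ∧ D.IsOrientedSpanningTreeRev T S r

/-- `c D k r` is the number of `k`-spanning trees of `D` rooted at `r`. -/
noncomputable def c (k : ℕ) (r : D.V) : ℕ :=
  Nat.card {T : Set D.E // D.IsKSpanningTree T r k}

/-- The transpose digraph: every edge reversed. -/
def transpose : Multidigraph := { D with first := D.last, last := D.first }

end Multidigraph

/-!
Weight each edge of `D` by `1` when traversed forwards and by `X` when traversed backwards, and
let `L` be the resulting Laplacian over `ℤ[X]`. Replacing row `r` of `L` by a unit vector and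
expanding the determinant row by row gives a sum over the ways of choosing one outgoing arc,
possibly reversed, at every vertex `v ≠ r`. Each choice contributes `X ^ (number of reversed arcs)`
times the determinant of the Laplacian of its functional graph, which is `1` if every vertex
flows to `r` and `0` otherwise. The choices in which every vertex flows to `r` are exactly the
spanning trees oriented towards `r` after reversing some of their edges, so the coefficient of
`X ^ k` in the `r`-th diagonal cofactor of `L` counts the `k`-spanning trees rooted at `r`.
The rows of `L` sum to zero, and because in-degree equals out-degree so do its columns; hence all
diagonal cofactors of `L` coincide.
-/

open Finset Polynomial

namespace Matrix

variable {n R : Type*} [Fintype n] [DecidableEq n] [CommRing R]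

theorem det_eq_zero_of_mulVec_eq_zero {A : Matrix n n R} {y : n → R} (hy : A *ᵥ y = 0) {i : n}
    (hi : y i = 1) : A.det = 0 := by
  have := congrFun (congrArg (A.adjugate *ᵥ ·) hy) i
  simpa [mulVec_mulVec, adjugate_mul, smul_mulVec, hi] using this

theorem det_eq_zero_of_sum_row_eq_zero [Nonempty n] {A : Matrix n n R}
    (h : ∀ i, ∑ j, A i j = 0) : A.det = 0 :=
  det_eq_zero_of_mulVec_eq_zero (y := 1) (funext fun i => by simpa [mulVec, dotProduct] using h i)
    (i := Classical.arbitrary n) rfl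

theorem adjugate_apply_eq_of_sum_row_eq_zero {A : Matrix n n R} (h : ∀ i, ∑ j, A i j = 0)
    (i i' j : n) : A.adjugate i j = A.adjugate i' j := by
  have : Nonempty n := ⟨i⟩
  have hzero : (A.updateRow j (Pi.single i 1 - Pi.single i' 1)).det = 0 := by
    refine det_eq_zero_of_sum_row_eq_zero fun v => ?_
    by_cases hv : v = j
    · subst hv; simp [Finset.sum_sub_distrib]
    · simpa [updateRow_ne hv] using h v
  have hsplit := det_updateRow_add A j (Pi.single i 1 - Pi.single i' 1) (Pi.single i' 1)
  rwa [sub_add_cancel, hzero, zero_add, ← adjugate_apply, ← adjugate_apply] at hsplit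

theorem adjugate_apply_eq_of_sum_col_eq_zero {A : Matrix n n R} (h : ∀ j, ∑ i, A i j = 0)
    (i j j' : n) : A.adjugate i j = A.adjugate i j' := by
  simpa [← adjugate_transpose] using adjugate_apply_eq_of_sum_row_eq_zero (A := Aᵀ) h j j' i

theorem adjugate_apply_self_eq_of_sum_eq_zero {A : Matrix n n R} (hrow : ∀ i, ∑ j, A i j = 0)
    (hcol : ∀ j, ∑ i, A i j = 0) (i j : n) : A.adjugate i i = A.adjugate j j := by
  rw [adjugate_apply_eq_of_sum_row_eq_zero hrow i j i,
    adjugate_apply_eq_of_sum_col_eq_zero hcol j i j]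

end Matrix

def ReachesRoot {α : Type*} (g : α → α) (r : α) : Prop := ∀ v, ∃ n, g^[n] v = r

section ReachesRoot

variable {α : Type*} {g : α → α} {r v : α}

theorem exists_iterate_apply_eq_iff (hv : v ≠ r) :
    (∃ n, g^[n] (g v) = r) ↔ ∃ n, g^[n] v = r := by
  constructor
  · rintro ⟨n, hn⟩
    exact ⟨n + 1, hn⟩
  · rintro ⟨_ | n, hn⟩
    · exact absurd hn hv
    · exact ⟨n, hn⟩

namespace ReachesRoot

noncomputable def height (h : ReachesRoot g r) (v : α) : ℕ := Nat.find (h v)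

theorem height_apply_lt (h : ReachesRoot g r) (hv : v ≠ r) : h.height (g v) < h.height v := by
  have hspec : g^[h.height v] v = r := Nat.find_spec (h v)
  obtain ⟨m, hm⟩ : ∃ m, h.height v = m + 1 :=
    Nat.exists_eq_succ_of_ne_zero fun h0 => hv (by rwa [h0] at hspec)
  rw [hm, Function.iterate_succ_apply] at hspec
  exact hm ▸ Nat.lt_succ_of_le (Nat.find_le hspec)

end ReachesRoot

end ReachesRoot

section FunGraph

variable {n : Type*} [DecidableEq n] (R : Type*) [CommRing R]

/-- The Laplacian `1 - P_g` of the functional graph of `g`, with row `r` replaced by the unit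
vector at `r`. -/
def funGraphMatrix (r : n) (g : n → n) : Matrix n n R :=
  Matrix.of fun v => if v = r then Pi.single r 1 else Pi.single v 1 - Pi.single (g v) 1

variable {R} {r : n} {g : n → n}

theorem funGraphMatrix_root_row : funGraphMatrix R r g r = Pi.single r 1 := if_pos rfl

theorem funGraphMatrix_row_of_ne {v : n} (hv : v ≠ r) :
    funGraphMatrix R r g v = Pi.single v 1 - Pi.single (g v) 1 := if_neg hv

theorem funGraphMatrix_apply_eq_one_apply {v w : n} (hgw : v ≠ r → g v ≠ w) :
    funGraphMatrix R r g v w = (1 : Matrix n n R) v w := by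
  rw [Matrix.one_apply]
  by_cases hv : v = r
  · subst hv
    rw [funGraphMatrix_root_row, Pi.single_apply]
    exact if_congr eq_comm rfl rfl
  · rw [funGraphMatrix_row_of_ne hv, Pi.sub_apply, Pi.single_apply, Pi.single_apply,
      if_neg (hgw hv).symm, sub_zero]
    exact if_congr eq_comm rfl rfl

/-- Ordered by decreasing height, the matrix is block triangular with identity blocks. -/
theorem det_funGraphMatrix_of_reachesRoot [Fintype n] (h : ReachesRoot g r) :
    (funGraphMatrix R r g).det = 1 := by
  have hgw : ∀ {v w}, h.height v ≤ h.height w → v ≠ r → g v ≠ w := by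
    rintro v _ hvw hv rfl
    exact (h.height_apply_lt hv).not_ge hvw
  have htri : (funGraphMatrix R r g).BlockTriangular (OrderDual.toDual ∘ h.height) := by
    intro v w (hvw : h.height v < h.height w)
    rw [funGraphMatrix_apply_eq_one_apply (hgw hvw.le), Matrix.one_apply_ne]
    rintro rfl
    exact lt_irrefl _ hvw
  rw [htri.det]
  refine Finset.prod_eq_one fun k _ => ?_
  suffices hblock : (funGraphMatrix R r g).toSquareBlock (OrderDual.toDual ∘ h.height) k = 1 by
    rw [hblock, Matrix.det_one]
  ext ⟨v, hv⟩ ⟨w, hw⟩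
  have hvw : h.height v = h.height w := OrderDual.toDual_inj.1 (hv.trans hw.symm)
  change funGraphMatrix R r g v w = _
  rw [funGraphMatrix_apply_eq_one_apply (hgw hvw.le), Matrix.one_apply, Matrix.one_apply]
  simp only [Subtype.mk.injEq]

/-- The indicator of the vertices that never reach `r` lies in the kernel. -/
theorem det_funGraphMatrix_of_not_reachesRoot [Fintype n] (h : ¬ ReachesRoot g r) :
    (funGraphMatrix R r g).det = 0 := by
  obtain ⟨v₀, hv₀⟩ := not_forall.1 h
  refine Matrix.det_eq_zero_of_mulVec_eq_zero
    (y := fun v => if ∃ n, g^[n] v = r then 0 else 1) ?_ (i := v₀) (if_neg hv₀)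
  funext v
  by_cases hv : v = r
  · subst hv
    have : ∃ n, g^[n] v = v := ⟨0, rfl⟩
    simp [Matrix.mulVec, funGraphMatrix_root_row, this]
  · simp only [Matrix.mulVec, funGraphMatrix_row_of_ne hv, sub_dotProduct, single_dotProduct,
      one_mul, exists_iterate_apply_eq_iff hv, sub_self, Pi.zero_apply]

end FunGraph

namespace Multidigraph

section Laplacian

variable (D : Multidigraph)

/-- `(e, false)` traverses `e` forwards, `(e, true)` traverses it backwards. -/
abbrev Arc := D.E × Bool

def tail (a : D.Arc) : D.V := if a.2 then D.last a.1 else D.first a.1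

def head (a : D.Arc) : D.V := if a.2 then D.first a.1 else D.last a.1

@[simp]
theorem tail_not (e : D.E) (b : Bool) : D.tail (e, !b) = D.head (e, b) := by
  cases b <;> rfl

@[simp]
theorem head_not (e : D.E) (b : Bool) : D.head (e, !b) = D.tail (e, b) := by
  cases b <;> rfl

noncomputable def arcWeight (a : D.Arc) : ℤ[X] := if a.2 then X else 1

noncomputable def arcRow (a : D.Arc) : D.V → ℤ[X] :=
  D.arcWeight a • (Pi.single (D.tail a) 1 - Pi.single (D.head a) 1)

noncomputable def laplacian : Matrix D.V D.V ℤ[X] :=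
  Matrix.of fun v => ∑ a with D.tail a = v, D.arcRow a

theorem sum_laplacian_row (v : D.V) : ∑ w, D.laplacian v w = 0 := by
  simp only [laplacian, Matrix.of_apply, Finset.sum_apply]
  rw [Finset.sum_comm]
  refine Finset.sum_eq_zero fun a _ => ?_
  simp [arcRow, ← Finset.mul_sum, Finset.sum_sub_distrib]

theorem sum_single_first (w : D.V) :
    ∑ e, (Pi.single (D.first e) 1 : D.V → ℤ[X]) w = (D.outdeg w : ℤ[X]) := by
  simp [Pi.single_apply, Finset.sum_boole, outdeg, Nat.card_eq_fintype_card, Fintype.card_subtype,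
    eq_comm]

theorem sum_single_last (w : D.V) :
    ∑ e, (Pi.single (D.last e) 1 : D.V → ℤ[X]) w = (D.indeg w : ℤ[X]) := by
  simp [Pi.single_apply, Finset.sum_boole, indeg, Nat.card_eq_fintype_card, Fintype.card_subtype,
    eq_comm]

theorem sum_laplacian_col (h : ∀ v, D.indeg v = D.outdeg v) (w : D.V) :
    ∑ v, D.laplacian v w = 0 := by
  simp only [laplacian, Matrix.of_apply, Finset.sum_apply]
  rw [Finset.sum_fiberwise Finset.univ D.tail (D.arcRow · w), Fintype.sum_prod_type]
  have hedge : ∀ e, ∑ b, D.arcRow (e, b) w = (1 - X) *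
      ((Pi.single (D.first e) 1 : D.V → ℤ[X]) w - (Pi.single (D.last e) 1 : D.V → ℤ[X]) w) := by
    intro e
    simp only [Fintype.sum_bool, arcRow, arcWeight, tail, head, Pi.smul_apply, Pi.sub_apply,
      smul_eq_mul, if_true, Bool.false_eq_true, if_false]
    ring
  rw [Finset.sum_congr rfl fun e _ => hedge e, ← Finset.mul_sum, Finset.sum_sub_distrib,
    sum_single_first, sum_single_last, h, sub_self, mul_zero]

/-- `none` stands for the unit row that replaces row `r`. -/
noncomputable def choices (r v : D.V) : Finset (Option D.Arc) :=
  if v = r then {none} else ({a | D.tail a = v} : Finset D.Arc).map Function.Embedding.some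

noncomputable def choiceRow (r : D.V) (j : Option D.Arc) : D.V → ℤ[X] :=
  j.elim (Pi.single r 1) D.arcRow

theorem updateRow_laplacian (r : D.V) :
    D.laplacian.updateRow r (Pi.single r 1) =
      Matrix.of fun v => ∑ j ∈ D.choices r v, D.choiceRow r j := by
  ext v : 1
  by_cases hv : v = r
  · subst hv
    simp [choices, choiceRow]
  · simp [choices, choiceRow, hv, laplacian]

def IsArcChoice (r : D.V) (f : D.V → Option D.Arc) : Prop :=
  f r = none ∧ ∀ v, v ≠ r → ∃ a, f v = some a ∧ D.tail a = v

theorem mem_piFinset_choices {r : D.V} {f : D.V → Option D.Arc} :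
    f ∈ Fintype.piFinset (D.choices r) ↔ D.IsArcChoice r f := by
  simp only [Fintype.mem_piFinset, choices, IsArcChoice]
  constructor
  · intro h
    refine ⟨by simpa using h r, fun v hv => ?_⟩
    obtain ⟨a, ha, hfa⟩ := Finset.mem_map.1 (by simpa only [if_neg hv] using h v)
    exact ⟨a, hfa.symm, (Finset.mem_filter.1 ha).2⟩
  · rintro ⟨hr, h⟩ v
    by_cases hv : v = r
    · simp [hv, hr]
    · obtain ⟨a, hfa, hta⟩ := h v hv
      simp [hv, hfa, hta]

def step (f : D.V → Option D.Arc) (v : D.V) : D.V := (f v).elim v D.head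

noncomputable def numReversed (f : D.V → Option D.Arc) : ℕ := #{v | ∃ e, f v = some (e, true)}

theorem prod_arcWeight (f : D.V → Option D.Arc) :
    ∏ v, (f v).elim 1 D.arcWeight = X ^ D.numReversed f := by
  calc ∏ v, (f v).elim 1 D.arcWeight = ∏ v, if ∃ e, f v = some (e, true) then X else 1 := by
        refine Finset.prod_congr rfl fun v _ => ?_
        rcases f v with _ | ⟨e, _ | _⟩ <;> simp [arcWeight]
    _ = X ^ D.numReversed f := by rw [← Finset.prod_filter, Finset.prod_const, numReversed]

theorem choiceRow_eq {r : D.V} {f : D.V → Option D.Arc} (hf : D.IsArcChoice r f) (v : D.V) :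
    D.choiceRow r (f v) = (f v).elim 1 D.arcWeight • funGraphMatrix ℤ[X] r (D.step f) v := by
  by_cases hv : v = r
  · subst hv
    simp [hf.1, choiceRow, funGraphMatrix_root_row]
  · obtain ⟨a, hfa, hta⟩ := hf.2 v hv
    simp [hfa, hta, choiceRow, funGraphMatrix_row_of_ne hv, arcRow, step]

theorem adjugate_laplacian_self (r : D.V) :
    D.laplacian.adjugate r r = ∑ f ∈ Fintype.piFinset (D.choices r),
      if ReachesRoot (D.step f) r then X ^ D.numReversed f else 0 := by
  rw [Matrix.adjugate_apply, updateRow_laplacian]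
  change Matrix.detRowAlternating.toMultilinearMap
    (fun v => ∑ j ∈ D.choices r v, D.choiceRow r j) = _
  rw [MultilinearMap.map_sum_finset]
  refine Finset.sum_congr rfl fun f hf => ?_
  have hrows : (fun v => D.choiceRow r (f v)) =
      Matrix.of fun v w => (f v).elim 1 D.arcWeight * funGraphMatrix ℤ[X] r (D.step f) v w := by
    ext v w
    simp [choiceRow_eq D (D.mem_piFinset_choices.1 hf)]
  change Matrix.det _ = _
  rw [hrows, Matrix.det_mul_column, prod_arcWeight]
  split_ifs with h
  · rw [det_funGraphMatrix_of_reachesRoot h, mul_one]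
  · rw [det_funGraphMatrix_of_not_reachesRoot h, mul_zero]

end Laplacian

section SpanningTrees

variable {D : Multidigraph}

theorem adj_iff_exists_arc {T : Set D.E} {a b : D.V} :
    D.Adj T a b ↔ ∃ e ∈ T, ∃ β, D.tail (e, β) = a ∧ D.head (e, β) = b := by
  constructor
  · rintro ⟨e, he, ⟨h₁, h₂⟩ | ⟨h₁, h₂⟩⟩
    · exact ⟨e, he, false, h₁, h₂⟩
    · exact ⟨e, he, true, h₂, h₁⟩
  · rintro ⟨e, he, _ | _, h₁, h₂⟩
    · exact ⟨e, he, Or.inl ⟨h₁, h₂⟩⟩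
    · exact ⟨e, he, Or.inr ⟨h₂, h₁⟩⟩

instance (T : Set D.E) : Std.Symm (D.Adj T) :=
  ⟨fun _ _ ⟨e, he, h⟩ => ⟨e, he, h.symm⟩⟩

theorem reach_symm {T : Set D.E} {a b : D.V} (h : D.Reach T a b) : D.Reach T b a :=
  Std.Symm.symm (r := Relation.ReflTransGen (D.Adj T)) a b h

/-- The arc along which `e` points towards the root once the edges of `S` are reversed. -/
noncomputable def arcOf (S : Set D.E) (e : D.E) : D.Arc := (e, decide (e ∈ S))

theorem outdegRev_eq_card {T S : Set D.E} (hST : S ⊆ T) (v : D.V) :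
    D.outdegRev T S v = Nat.card {e // e ∈ T ∧ D.tail (arcOf S e) = v} := by
  refine Nat.card_congr (Equiv.subtypeEquivRight fun e => ?_)
  by_cases he : e ∈ S
  · simp [arcOf, tail, he, hST he]
  · simp [arcOf, tail, he]

def treeEdges (f : D.V → Option D.Arc) : Set D.E := {e | ∃ v b, f v = some (e, b)}

def reversedEdges (f : D.V → Option D.Arc) : Set D.E := {e | ∃ v, f v = some (e, true)}

theorem reversedEdges_subset_treeEdges (f : D.V → Option D.Arc) :
    reversedEdges f ⊆ treeEdges f :=
  fun _ ⟨v, h⟩ => ⟨v, true, h⟩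

theorem step_eq_head {f : D.V → Option D.Arc} {v : D.V} {a : D.Arc} (h : f v = some a) :
    D.step f v = D.head a := by
  simp [step, h]

namespace IsArcChoice

variable {r v : D.V} {f : D.V → Option D.Arc}

theorem ne_root (hf : D.IsArcChoice r f) {a : D.Arc} (h : f v = some a) : v ≠ r := by
  rintro rfl
  simp [hf.1] at h

theorem tail_eq (hf : D.IsArcChoice r f) {a : D.Arc} (h : f v = some a) : D.tail a = v := by
  obtain ⟨a', h', ht⟩ := hf.2 v (hf.ne_root h)
  rwa [Option.some_inj.1 (h.symm.trans h')]

/-- Two opposite arcs of one edge would form a cycle avoiding the root. -/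
theorem eq_of_apply_eq_some (hf : D.IsArcChoice r f) (hr : ReachesRoot (D.step f) r)
    {v v' : D.V} {e : D.E} {b b' : Bool} (h : f v = some (e, b)) (h' : f v' = some (e, b')) :
    v = v' ∧ b = b' := by
  obtain rfl | rfl : b' = b ∨ b' = !b := by cases b <;> cases b' <;> simp
  · exact ⟨(hf.tail_eq h).symm.trans (hf.tail_eq h'), rfl⟩
  · exfalso
    have hv' : D.step f v = v' := by rw [step_eq_head h, ← tail_not, hf.tail_eq h']
    have hv : D.step f v' = v := by rw [step_eq_head h', head_not, hf.tail_eq h]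
    have h₁ := hr.height_apply_lt (hf.ne_root h)
    have h₂ := hr.height_apply_lt (hf.ne_root h')
    rw [hv'] at h₁
    rw [hv] at h₂
    omega

theorem apply_eq_some_arcOf (hf : D.IsArcChoice r f) (hr : ReachesRoot (D.step f) r)
    {e : D.E} {b : Bool} (h : f v = some (e, b)) : f v = some (arcOf (reversedEdges f) e) := by
  cases b
  · have he : e ∉ reversedEdges f := fun ⟨v', h'⟩ => by
      simpa using (hf.eq_of_apply_eq_some hr h h').2
    simpa [arcOf, he] using h
  · simpa [arcOf, show e ∈ reversedEdges f from ⟨v, h⟩] using h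

theorem apply_tail_arcOf (hf : D.IsArcChoice r f) (hr : ReachesRoot (D.step f) r) {e : D.E}
    (he : e ∈ treeEdges f) :
    f (D.tail (arcOf (reversedEdges f) e)) = some (arcOf (reversedEdges f) e) := by
  obtain ⟨v, b, h⟩ := he
  have h' := hf.apply_eq_some_arcOf hr h
  rwa [hf.tail_eq h']

theorem tail_arcOf_eq (hf : D.IsArcChoice r f) (hr : ReachesRoot (D.step f) r) {e : D.E}
    {b : Bool} (h : f v = some (e, b)) : D.tail (arcOf (reversedEdges f) e) = v :=
  hf.tail_eq (hf.apply_eq_some_arcOf hr h)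

theorem tail_arcOf_injOn (hf : D.IsArcChoice r f) (hr : ReachesRoot (D.step f) r) :
    Set.InjOn (fun e => D.tail (arcOf (reversedEdges f) e)) (treeEdges f) := by
  intro e he e' he' hee
  have h := hf.apply_tail_arcOf hr he
  rw [show D.tail _ = D.tail _ from hee, hf.apply_tail_arcOf hr he'] at h
  exact congrArg Prod.fst (Option.some_inj.1 h).symm

theorem outdegRev_of_ne_root (hf : D.IsArcChoice r f) (hr : ReachesRoot (D.step f) r)
    (hv : v ≠ r) : D.outdegRev (treeEdges f) (reversedEdges f) v = 1 := by
  rw [outdegRev_eq_card (reversedEdges_subset_treeEdges f), Nat.card_eq_one_iff_exists]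
  obtain ⟨⟨e, b⟩, h, -⟩ := hf.2 v hv
  refine ⟨⟨e, ⟨v, b, h⟩, hf.tail_arcOf_eq hr h⟩, fun ⟨e', he', ht'⟩ => ?_⟩
  exact Subtype.ext (hf.tail_arcOf_injOn hr he' ⟨v, b, h⟩ (ht'.trans (hf.tail_arcOf_eq hr h).symm))

theorem outdegRev_root (hf : D.IsArcChoice r f) (hr : ReachesRoot (D.step f) r) :
    D.outdegRev (treeEdges f) (reversedEdges f) r = 0 := by
  rw [outdegRev_eq_card (reversedEdges_subset_treeEdges f), Nat.card_eq_zero]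
  refine Or.inl ⟨fun ⟨e, he, ht⟩ => ?_⟩
  have h := hf.apply_tail_arcOf hr he
  rw [ht, hf.1] at h
  cases h

theorem card_treeEdges (hf : D.IsArcChoice r f) (hr : ReachesRoot (D.step f) r) :
    Nat.card (treeEdges f) = Nat.card D.V - 1 := by
  have hne : Nat.card {v // v ≠ r} = Nat.card D.V - 1 := by
    rw [Nat.card_eq_fintype_card, Nat.card_eq_fintype_card, Fintype.card_subtype_compl,
      Fintype.card_subtype_eq]
  rw [← hne]
  refine Nat.card_eq_of_bijective (fun e => ⟨D.tail (arcOf (reversedEdges f) e),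
    hf.ne_root (hf.apply_tail_arcOf hr e.2)⟩) ⟨fun e e' hee => ?_, fun v => ?_⟩
  · exact Subtype.ext (hf.tail_arcOf_injOn hr e.2 e'.2 (congrArg Subtype.val hee))
  · obtain ⟨⟨e, b⟩, h, -⟩ := hf.2 v v.2
    exact ⟨⟨e, v, b, h⟩, Subtype.ext (hf.tail_arcOf_eq hr h)⟩

theorem card_reversedEdges (hf : D.IsArcChoice r f) (hr : ReachesRoot (D.step f) r) :
    Nat.card (reversedEdges f) = D.numReversed f := by
  rw [numReversed, ← Fintype.card_subtype, ← Nat.card_eq_fintype_card]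
  refine Nat.card_eq_of_bijective (fun e => ⟨D.tail (arcOf (reversedEdges f) e), ?_⟩)
    ⟨fun e e' hee => ?_, fun ⟨v, e, h⟩ => ⟨⟨e, v, h⟩, Subtype.ext (hf.tail_arcOf_eq hr h)⟩⟩
  · have h := hf.apply_tail_arcOf hr (reversedEdges_subset_treeEdges f e.2)
    exact ⟨e, by simpa [arcOf, e.2] using h⟩
  · exact Subtype.ext (hf.tail_arcOf_injOn hr (reversedEdges_subset_treeEdges f e.2)
      (reversedEdges_subset_treeEdges f e'.2) (congrArg Subtype.val hee))

theorem reach_root (hf : D.IsArcChoice r f) (hr : ReachesRoot (D.step f) r) (v : D.V) :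
    D.Reach (treeEdges f) v r := by
  obtain ⟨n, hn⟩ := hr v
  induction n generalizing v with
  | zero => exact hn ▸ Relation.ReflTransGen.refl
  | succ n ih =>
    by_cases hv : v = r
    · exact hv ▸ Relation.ReflTransGen.refl
    obtain ⟨⟨e, b⟩, h, -⟩ := hf.2 v hv
    have hadj : D.Adj (treeEdges f) v (D.step f v) :=
      adj_iff_exists_arc.2 ⟨e, ⟨v, b, h⟩, b, hf.tail_eq h, (step_eq_head h).symm⟩
    exact .head hadj (ih _ hn)

theorem isKSpanningTree_treeEdges (hf : D.IsArcChoice r f) (hr : ReachesRoot (D.step f) r) :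
    D.IsKSpanningTree (treeEdges f) r (D.numReversed f) :=
  ⟨reversedEdges f, hf.card_reversedEdges hr,
    ⟨fun a b => (hf.reach_root hr a).trans (reach_symm (hf.reach_root hr b)),
      hf.card_treeEdges hr⟩,
    reversedEdges_subset_treeEdges f, fun _ hv => hf.outdegRev_of_ne_root hr hv,
    hf.outdegRev_root hr⟩

/-- A vertex of maximal `f`-height where `f` and `f'` differ would have to be the image under
`step f` of a higher vertex where they agree. -/
theorem eq_of_treeEdges_eq {f' : D.V → Option D.Arc} (hf : D.IsArcChoice r f)
    (hr : ReachesRoot (D.step f) r) (hf' : D.IsArcChoice r f') (hr' : ReachesRoot (D.step f') r)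
    (hT : treeEdges f = treeEdges f') : f = f' := by
  by_contra hne
  obtain ⟨v, hv, hmax⟩ := Finset.exists_max_image {v | f v ≠ f' v} hr.height
    (by simpa [Finset.filter_nonempty_iff] using Function.ne_iff.1 hne)
  rw [Finset.mem_filter] at hv
  have hvr : v ≠ r := fun h => hv.2 (by rw [h, hf.1, hf'.1])
  obtain ⟨⟨e, b'⟩, h', -⟩ := hf'.2 v hvr
  obtain ⟨u, b, hu⟩ : e ∈ treeEdges f := hT ▸ ⟨v, b', h'⟩
  obtain rfl | rfl : b' = b ∨ b' = !b := by cases b <;> cases b' <;> simp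
  · obtain rfl : u = v := (hf.tail_eq hu).symm.trans (hf'.tail_eq h')
    exact hv.2 (hu.trans h'.symm)
  · have hlt := hr.height_apply_lt (hf.ne_root hu)
    rw [step_eq_head hu, ← tail_not, hf'.tail_eq h'] at hlt
    have hfu : f u = f' u := by
      by_contra hne'
      exact (hmax u (by simpa using hne')).not_gt hlt
    exact absurd (hf'.eq_of_apply_eq_some hr' (hfu ▸ hu) h').2 (by cases b <;> decide)

end IsArcChoice

variable {r : D.V} {f : D.V → Option D.Arc}

theorem exists_arcChoice_of_isOrientedSpanningTreeRev {T S : Set D.E}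
    (h : D.IsOrientedSpanningTreeRev T S r) :
    ∃ f, D.IsArcChoice r f ∧ (∀ v e b, f v = some (e, b) → e ∈ T ∧ b = decide (e ∈ S)) ∧
      ∀ e ∈ T, f (D.tail (arcOf S e)) = some (arcOf S e) := by
  obtain ⟨-, hST, hout, hroot⟩ := h
  have hex : ∀ v, v ≠ r → ∃ e, e ∈ T ∧ D.tail (arcOf S e) = v ∧
      ∀ e', e' ∈ T → D.tail (arcOf S e') = v → e' = e := by
    intro v hv
    have h := hout v hv
    rw [outdegRev_eq_card hST, Nat.card_eq_one_iff_exists] at h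
    obtain ⟨⟨e, he⟩, huniq⟩ := h
    exact ⟨e, he.1, he.2, fun e' he' ht' => congrArg Subtype.val (huniq ⟨e', he', ht'⟩)⟩
  have hne : ∀ e ∈ T, D.tail (arcOf S e) ≠ r := by
    intro e he ht
    rw [outdegRev_eq_card hST] at hroot
    have : Nonempty {e // e ∈ T ∧ D.tail (arcOf S e) = r} := ⟨⟨e, he, ht⟩⟩
    exact Nat.card_pos.ne' hroot
  choose pe hpeT hpet hpeu using hex
  refine ⟨fun v => if hv : v = r then none else some (arcOf S (pe v hv)),
    ⟨dif_pos rfl, fun v hv => ⟨_, dif_neg hv, hpet v hv⟩⟩, fun v e b h => ?_, fun e he => ?_⟩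
  · dsimp only at h
    split_ifs at h with hv
    cases h
    exact ⟨hpeT v hv, rfl⟩
  · dsimp only
    rw [dif_neg (hne e he), ← hpeu _ (hne e he) e he rfl]

theorem reachesRoot_of_spanning {T S : Set D.E} (hT : ∀ a b, D.Reach T a b)
    (hf : D.IsArcChoice r f) (hTf : ∀ e ∈ T, f (D.tail (arcOf S e)) = some (arcOf S e)) :
    ReachesRoot (D.step f) r := by
  have hadj : ∀ a b, D.Adj T a b → (∃ n, (D.step f)^[n] b = r) → ∃ n, (D.step f)^[n] a = r := by
    intro a b hab
    obtain ⟨e, he, β, rfl, rfl⟩ := adj_iff_exists_arc.1 hab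
    have hu := hTf e he
    have hstep := exists_iterate_apply_eq_iff (g := D.step f) (hf.ne_root hu)
    rw [step_eq_head hu] at hstep
    unfold arcOf at hstep
    obtain rfl | rfl : β = decide (e ∈ S) ∨ β = !decide (e ∈ S) := by
      cases β <;> cases decide (e ∈ S) <;> simp
    · exact hstep.1
    · simpa only [tail_not, head_not] using hstep.2
  intro v
  induction hT v r using Relation.ReflTransGen.head_induction_on with
  | refl => exact ⟨0, rfl⟩
  | head hab _ ih => exact hadj _ _ hab ih

theorem exists_arcChoice_of_isKSpanningTree {T : Set D.E} {k : ℕ}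
    (h : D.IsKSpanningTree T r k) :
    ∃ f, D.IsArcChoice r f ∧ ReachesRoot (D.step f) r ∧ D.numReversed f = k ∧
      treeEdges f = T := by
  obtain ⟨S, rfl, hS⟩ := h
  obtain ⟨f, hf, hfT, hTf⟩ := exists_arcChoice_of_isOrientedSpanningTreeRev hS
  have hr := reachesRoot_of_spanning hS.1.1 hf hTf
  have hrev : reversedEdges f = S := by
    ext e
    refine ⟨fun ⟨v, h⟩ => by simpa using (hfT v e true h).2.symm,
      fun he => ⟨D.tail (arcOf S e), ?_⟩⟩
    simpa [arcOf, he] using hTf e (hS.2.1 he)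
  refine ⟨f, hf, hr, by rw [← hf.card_reversedEdges hr, hrev], ?_⟩
  ext e
  exact ⟨fun ⟨v, b, h⟩ => (hfT v e b h).1, fun he => ⟨_, _, hTf e he⟩⟩

theorem c_eq_card (k : ℕ) (r : D.V) :
    D.c k r = #{f ∈ Fintype.piFinset (D.choices r) |
      ReachesRoot (D.step f) r ∧ D.numReversed f = k} := by
  rw [c, ← Nat.card_eq_finsetCard]
  symm
  refine Nat.card_eq_of_bijective (fun f => ⟨treeEdges f.1, ?_⟩) ⟨?_, fun ⟨T, hT⟩ => ?_⟩
  · obtain ⟨hmem, hr, hk⟩ := Finset.mem_filter.1 f.2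
    simpa only [hk] using (D.mem_piFinset_choices.1 hmem).isKSpanningTree_treeEdges hr
  · rintro ⟨f, hf⟩ ⟨f', hf'⟩ hT
    obtain ⟨hmem, hr, -⟩ := Finset.mem_filter.1 hf
    obtain ⟨hmem', hr', -⟩ := Finset.mem_filter.1 hf'
    exact Subtype.ext ((D.mem_piFinset_choices.1 hmem).eq_of_treeEdges_eq hr
      (D.mem_piFinset_choices.1 hmem') hr' (congrArg Subtype.val hT))
  · obtain ⟨f, hf, hr, hk, rfl⟩ := exists_arcChoice_of_isKSpanningTree hT
    exact ⟨⟨f, Finset.mem_filter.2 ⟨D.mem_piFinset_choices.2 hf, hr, hk⟩⟩, rfl⟩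

theorem coeff_adjugate_laplacian (k : ℕ) (r : D.V) :
    (D.laplacian.adjugate r r).coeff k = D.c k r := by
  rw [adjugate_laplacian_self, finsetSum_coeff, c_eq_card, Finset.natCast_card_filter]
  refine Finset.sum_congr rfl fun f _ => ?_
  split_ifs <;> simp_all [coeff_X_pow, eq_comm]

end SpanningTrees

end Multidigraph

/-- For any Eulerian digraph `D` and any `k`, the number of
`k`-spanning trees of `D` rooted at `r` is independent of the root `r`. -/
theorem stmt6 (D : Multidigraph) (hD : D.Eulerian) (k : ℕ) (r r' : D.V) :
    D.c k r = D.c k r' := by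
  have h := congrArg (Polynomial.coeff · k) (Matrix.adjugate_apply_self_eq_of_sum_eq_zero
    D.sum_laplacian_row (D.sum_laplacian_col hD.2) r r')
  simp only [Multidigraph.coeff_adjugate_laplacian] at h
  exact_mod_cast h
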